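/- arXiv:2006.13867 — 5 statements merged into one kernel-verified Lean document; each statement's English description precedes it below -/
import Mathlib

section
/- The K-envelope ū^K : ℝⁿ → ℝ is a real-valued convex function, and for every x ∈ ℝⁿ the intersection ∂ū^K(x) ∩ K is nonempty. -/
open MeasureTheory Metric Set
open scoped RealInnerProductSpace Topology

noncomputable section

abbrev Euc (n : ℕ) := EuclideanSpace ℝ (Fin n)

/-- The `K`-envelope of `u`: supremum of all affine functions with slope in `K`
lying below `u` on `closure Ω`. -/
def KEnv {n : ℕ} (K Ω : Set (Euc n)) (u : Euc n → ℝ) (x : Euc n) : ℝ :=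
  sSup {z : ℝ | ∃ a : ℝ, ∃ ξ ∈ K, (∀ y ∈ closure Ω, a + ⟪ξ, y⟫ ≤ u y) ∧ z = a + ⟪ξ, x⟫}

/-- The subdifferential of a function `φ : ℝⁿ → ℝ` at `x`. -/
def subdiff {n : ℕ} (φ : Euc n → ℝ) (x : Euc n) : Set (Euc n) :=
  {ξ | ∀ y, φ x + ⟪ξ, y - x⟫ ≤ φ y}

/-- The `K`-envelope is a real-valued convex function whose subdifferential meets `K`
at every point. -/
theorem stmt_5 {n : ℕ} (K Ω : Set (Euc n)) (u : Euc n → ℝ)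
    (hKcp : IsCompact K) (hKcv : Convex ℝ K) (hKne : K.Nonempty)
    (hΩo : IsOpen Ω) (hΩb : Bornology.IsBounded Ω) (hΩne : Ω.Nonempty)
    (hu : ContinuousOn u (closure Ω)) (hu2 : ContDiffOn ℝ 2 u Ω) :
    ConvexOn ℝ univ (KEnv K Ω u) ∧
      ∀ x : Euc n, (subdiff (KEnv K Ω u) x ∩ K).Nonempty := by
  have hclne : (closure Ω).Nonempty := hΩne.closure
  have hclcp : IsCompact (closure Ω) := hΩb.isCompact_closure
  obtain ⟨R, hR⟩ : ∃ R : ℝ, ∀ y ∈ closure Ω, ‖y‖ ≤ R := by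
    obtain ⟨R, hR⟩ := hclcp.isBounded.subset_closedBall 0
    exact ⟨R, fun y hy => by simpa [mem_closedBall, dist_eq_norm] using hR hy⟩
  set A : Euc n → ℝ := fun ξ => sInf ((fun y => u y - ⟪ξ, y⟫) '' closure Ω) with hAdef
  have hcont : ∀ ξ : Euc n, ContinuousOn (fun y => u y - ⟪ξ, y⟫) (closure Ω) :=
    fun ξ => hu.sub (Continuous.continuousOn (Continuous.inner continuous_const continuous_id))
  have hAle : ∀ ξ, ∀ y ∈ closure Ω, A ξ ≤ u y - ⟪ξ, y⟫ := by
    intro ξ y hy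
    exact csInf_le (hclcp.image_of_continuousOn (hcont ξ)).bddBelow ⟨y, hy, rfl⟩
  have hAatt : ∀ ξ, ∃ y ∈ closure Ω, A ξ = u y - ⟪ξ, y⟫ := by
    intro ξ
    obtain ⟨y, hy, hmin⟩ := hclcp.exists_isMinOn hclne (hcont ξ)
    refine ⟨y, hy, le_antisymm (hAle ξ y hy) ?_⟩
    exact le_csInf (hclne.image _) (by rintro z ⟨w, hw, rfl⟩; exact hmin hw)
  have hAmax : ∀ (a : ℝ) (ξ : Euc n), (∀ y ∈ closure Ω, a + ⟪ξ, y⟫ ≤ u y) → a ≤ A ξ := by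
    intro a ξ h
    refine le_csInf (hclne.image _) ?_
    rintro z ⟨w, hw, rfl⟩
    have := h w hw
    dsimp only
    linarith
  have hAcont : Continuous A := by
    have hL : ∀ ξ ξ' : Euc n, A ξ - A ξ' ≤ max R 0 * ‖ξ - ξ'‖ := by
      intro ξ ξ'
      obtain ⟨y, hy, hEq⟩ := hAatt ξ'
      have h1 : A ξ ≤ u y - ⟪ξ, y⟫ := hAle ξ y hy
      have h2 : ⟪ξ' - ξ, y⟫ ≤ ‖ξ' - ξ‖ * ‖y‖ := real_inner_le_norm _ _
      have h3 : ‖y‖ ≤ max R 0 := le_trans (hR y hy) (le_max_left _ _)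
      have h4 : ⟪ξ' - ξ, y⟫ = ⟪ξ', y⟫ - ⟪ξ, y⟫ := inner_sub_left _ _ _
      have h5 : ‖ξ' - ξ‖ = ‖ξ - ξ'‖ := norm_sub_rev _ _
      rw [h5] at h2
      have h6 : ‖ξ - ξ'‖ * ‖y‖ ≤ ‖ξ - ξ'‖ * max R 0 :=
        mul_le_mul_of_nonneg_left h3 (norm_nonneg _)
      linarith
    have : LipschitzWith (Real.toNNReal (max R 0)) A := by
      apply LipschitzWith.of_dist_le_mul
      intro ξ ξ'
      rw [Real.dist_eq, dist_eq_norm, Real.coe_toNNReal _ (le_max_right R 0), abs_sub_le_iff]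
      exact ⟨hL ξ ξ', by simpa [norm_sub_rev ξ ξ'] using hL ξ' ξ⟩
    exact this.continuous
  -- maximizer of ξ ↦ A ξ + ⟪ξ, x⟫ over K
  have hmax : ∀ x : Euc n, ∃ ξ ∈ K, ∀ η ∈ K, A η + ⟪η, x⟫ ≤ A ξ + ⟪ξ, x⟫ := by
    intro x
    obtain ⟨ξ, hξ, hm⟩ := hKcp.exists_isMaxOn hKne
      ((hAcont.add (Continuous.inner continuous_id continuous_const)).continuousOn :
        ContinuousOn (fun ξ => A ξ + ⟪ξ, x⟫) K)
    exact ⟨ξ, hξ, fun η hη => hm hη⟩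
  set S : Euc n → Set ℝ := fun x =>
    {z : ℝ | ∃ a : ℝ, ∃ ξ ∈ K, (∀ y ∈ closure Ω, a + ⟪ξ, y⟫ ≤ u y) ∧ z = a + ⟪ξ, x⟫} with hSdef
  have hKEnv : ∀ x, KEnv K Ω u x = sSup (S x) := fun x => rfl
  have hfeas : ∀ ξ ∈ K, ∀ x : Euc n, A ξ + ⟪ξ, x⟫ ∈ S x :=
    fun ξ hξ x => ⟨A ξ, ξ, hξ, fun y hy => by linarith [hAle ξ y hy], rfl⟩
  have hSub : ∀ x : Euc n, ∀ ξ ∈ K, (∀ η ∈ K, A η + ⟪η, x⟫ ≤ A ξ + ⟪ξ, x⟫) →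
      ∀ z ∈ S x, z ≤ A ξ + ⟪ξ, x⟫ := by
    rintro x ξ hξ hm z ⟨a, η, hη, hay, rfl⟩
    have : a ≤ A η := hAmax a η hay
    linarith [hm η hη]
  have hbdd : ∀ x, BddAbove (S x) := by
    intro x
    obtain ⟨ξ, hξ, hm⟩ := hmax x
    exact ⟨A ξ + ⟪ξ, x⟫, fun z hz => hSub x ξ hξ hm z hz⟩
  have hEnv_le : ∀ x : Euc n, ∀ ξ ∈ K, A ξ + ⟪ξ, x⟫ ≤ KEnv K Ω u x := by
    intro x ξ hξ
    rw [hKEnv]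
    exact le_csSup (hbdd x) (hfeas ξ hξ x)
  have hEnv_eq : ∀ x : Euc n, ∃ ξ ∈ K, KEnv K Ω u x = A ξ + ⟪ξ, x⟫ := by
    intro x
    obtain ⟨ξ, hξ, hm⟩ := hmax x
    refine ⟨ξ, hξ, le_antisymm ?_ (hEnv_le x ξ hξ)⟩
    rw [hKEnv]
    exact csSup_le ⟨_, hfeas ξ hξ x⟩ (hSub x ξ hξ hm)
  constructor
  · refine ⟨convex_univ, ?_⟩
    intro x _ y _ a b ha hb hab
    obtain ⟨ξ, hξ, hEq⟩ := hEnv_eq (a • x + b • y)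
    have h1 : A ξ + ⟪ξ, x⟫ ≤ KEnv K Ω u x := hEnv_le x ξ hξ
    have h2 : A ξ + ⟪ξ, y⟫ ≤ KEnv K Ω u y := hEnv_le y ξ hξ
    have h3 : ⟪ξ, a • x + b • y⟫ = a * ⟪ξ, x⟫ + b * ⟪ξ, y⟫ := by
      rw [inner_add_right, real_inner_smul_right, real_inner_smul_right]
    rw [hEq, h3, smul_eq_mul, smul_eq_mul]
    have hA1 : a * A ξ + b * A ξ = A ξ := by rw [← add_mul, hab, one_mul]
    have h1' := mul_le_mul_of_nonneg_left h1 ha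
    have h2' := mul_le_mul_of_nonneg_left h2 hb
    rw [mul_add] at h1' h2'
    linarith
  · intro x
    obtain ⟨ξ, hξ, hEq⟩ := hEnv_eq x
    refine ⟨ξ, ?_, hξ⟩
    intro y
    have h1 : A ξ + ⟪ξ, y⟫ ≤ KEnv K Ω u y := hEnv_le y ξ hξ
    have h2 : ⟪ξ, y - x⟫ = ⟪ξ, y⟫ - ⟪ξ, x⟫ := inner_sub_right _ _ _
    rw [hEq]
    linarith
end
end

section
/- (a) For every ξ ∈ K and every x_ξ ∈ S_ξ, one has ū^K(x_ξ) = u(x_ξ) and ξ ∈ ∂ū^K(x_ξ). (b) For every x ∈ ℝⁿ and every ξ ∈ ∂ū^K(x) ∩ K, there exists v ∈ N(ξ, K) such that x − v belongs to the convex hull of S_ξ. -/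
open MeasureTheory Metric Set
open scoped RealInnerProductSpace Topology

noncomputable section

/-- The set of minimizers `S_ξ = argmin_{x ∈ cl Ω} (u x − ξ·x)`. -/
def Sset {n : ℕ} (Ω : Set (Euc n)) (u : Euc n → ℝ) (ξ : Euc n) : Set (Euc n) :=
  {x ∈ closure Ω | ∀ y ∈ closure Ω, u x - ⟪ξ, x⟫ ≤ u y - ⟪ξ, y⟫}

/-- The normal cone of `K` at `ξ`. -/
def normalCone {n : ℕ} (K : Set (Euc n)) (ξ : Euc n) : Set (Euc n) :=
  {v | ∀ ξ' ∈ K, ⟪v, ξ' - ξ⟫ ≤ 0}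

/-!
The affine function `z ↦ min_{cl Ω} (u - ⟪ξ, ·⟫) + ⟪ξ, z⟫` is an admissible minorant touching `u`
exactly on `S_ξ`, which gives (a). For (b), if `ξ ∈ ∂ū^K(x) ∩ K`, then `ū^K(x)` is attained by the
slope `ξ`; comparing with the slopes `ξ + t (ξ' - ξ) ∈ K` and letting `t → 0` (their minimizers
accumulate in `S_ξ`) yields, for every `ξ' ∈ K`, some `y ∈ S_ξ` with `⟪ξ' - ξ, x⟫ ≤ ⟪ξ' - ξ, y⟫`.
A Farkas-type separation argument turns these pointwise inequalities into a single point
`c ∈ conv S_ξ` with `x - c ∈ N(ξ, K)`.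
-/

open Filter

theorem IsCompact.convexHull {E : Type*} [NormedAddCommGroup E] [NormedSpace ℝ E]
    [FiniteDimensional ℝ E] {s : Set E} (hs : IsCompact s) :
    IsCompact (_root_.convexHull ℝ s) := by
  let F (k : ℕ) : Set E := (fun p : (Fin k → ℝ) × (Fin k → E) ↦ ∑ i, p.1 i • p.2 i) ''
    (stdSimplex ℝ (Fin k) ×ˢ univ.pi fun _ ↦ s)
  have hF (k : ℕ) : IsCompact (F k) :=
    ((isCompact_stdSimplex _ _).prod (isCompact_univ_pi fun _ ↦ hs)).image (by fun_prop)
  suffices _root_.convexHull ℝ s = ⋃ k : Fin (Module.finrank ℝ E + 2), F k by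
    rw [this]
    exact isCompact_iUnion fun k ↦ hF k
  refine Subset.antisymm (fun x hx ↦ ?_) (iUnion_subset fun k ↦ ?_)
  · -- Carathéodory: at most `finrank + 1` affinely independent points are needed.
    obtain ⟨ι, _, z, w, hzs, hz, hw₀, hw₁, rfl⟩ := eq_pos_convex_span_of_mem_convexHull hx
    have hcard : Fintype.card ι < Module.finrank ℝ E + 2 := by
      have := hz.card_le_finrank_succ.trans (Nat.succ_le_succ (Submodule.finrank_le _))
      omega
    let e := (Fintype.equivFin ι).symm
    refine mem_iUnion.2 ⟨⟨_, hcard⟩, (w ∘ e, z ∘ e), ⟨⟨fun i ↦ (hw₀ _).le, ?_⟩,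
      fun i _ ↦ hzs (mem_range_self _)⟩, ?_⟩
    · exact (e.sum_comp w).trans hw₁
    · exact e.sum_comp fun i ↦ w i • z i
  · rintro _ ⟨⟨w, y⟩, ⟨hw, hy⟩, rfl⟩
    exact (convex_convexHull ℝ s).sum_mem (fun i _ ↦ hw.1 i) hw.2
      fun i _ ↦ subset_convexHull ℝ s (hy i (mem_univ i))

section InnerProductSpace

variable {E : Type*} [NormedAddCommGroup E] [InnerProductSpace ℝ E]

theorem ProperCone.innerDual_innerDual_subset_closure_hull [CompleteSpace E] {s : Set E}
    (h0 : (0 : E) ∈ s) :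
    (innerDual (innerDual s : Set E) : Set E) ⊆ closure (ConvexCone.hull ℝ s) := by
  let C : ProperCone ℝ E :=
    Submodule.closure ((ConvexCone.hull ℝ s).toPointedCone (ConvexCone.subset_hull h0))
  have hsC : s ⊆ C := fun d hd ↦ subset_closure (ConvexCone.subset_hull hd)
  have := innerDual_le_innerDual (innerDual_le_innerDual hsC)
  rwa [innerDual_innerDual] at this

theorem isClosed_setOf_exists_inner_le {S : Set E} (hS : IsCompact S) (x : E) :
    IsClosed {d : E | ∃ y ∈ S, ⟪d, x⟫ ≤ ⟪d, y⟫} := by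
  have : CompactSpace S := isCompact_iff_compactSpace.mp hS
  have hA : {d : E | ∃ y ∈ S, ⟪d, x⟫ ≤ ⟪d, y⟫} =
      Prod.fst '' {p : E × S | ⟪p.1, x⟫ ≤ ⟪p.1, (p.2 : E)⟫} := by
    ext d
    simp
  rw [hA]
  exact isClosedMap_fst_of_compactSpace _ (isClosed_le (by fun_prop) (by fun_prop))

theorem exists_mem_convexHull_forall_inner_le [FiniteDimensional ℝ E] {S s : Set E}
    (hS : IsCompact S) (hs : Convex ℝ s) (h0 : (0 : E) ∈ s) {x : E}
    (h : ∀ d ∈ s, ∃ y ∈ S, ⟪d, x⟫ ≤ ⟪d, y⟫) :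
    ∃ c ∈ convexHull ℝ S, ∀ d ∈ s, ⟪d, x⟫ ≤ ⟪d, c⟫ := by
  -- Otherwise `conv S - x` misses the dual cone of `s`; a separating vector lies in the bidual
  -- cone, the closed cone spanned by `s`, to which `h` extends, giving `y ∈ S` on the wrong side.
  by_contra! hne
  have hdisj : Disjoint ((fun c ↦ -x + c) '' convexHull ℝ S) (ProperCone.innerDual s) := by
    refine disjoint_left.2 ?_
    rintro _ ⟨c, hc, rfl⟩ hcs
    obtain ⟨d, hd, hlt⟩ := hne c hc
    have : 0 ≤ ⟪d, -x + c⟫ := hcs hd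
    rw [inner_add_right, inner_neg_right] at this
    linarith
  obtain ⟨f, hf_dual, hf_neg⟩ := (ProperCone.innerDual s).hyperplane_separation
    ((convex_convexHull ℝ S).translate (-x)) (hS.convexHull.image (by fun_prop)) hdisj
  set w := (InnerProductSpace.toDual ℝ E).symm f
  have hwf (z : E) : ⟪w, z⟫ = f z := InnerProductSpace.toDual_symm_apply
  have hw : w ∈ closure (ConvexCone.hull ℝ s) := by
    refine ProperCone.innerDual_innerDual_subset_closure_hull h0 fun p hp ↦ ?_
    change 0 ≤ ⟪p, w⟫
    rw [real_inner_comm, hwf]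
    exact hf_dual p hp
  have hcone : (ConvexCone.hull ℝ s : Set E) ⊆ {d : E | ∃ y ∈ S, ⟪d, x⟫ ≤ ⟪d, y⟫} := by
    intro _ hmem
    obtain ⟨r, hr, d, hd, rfl⟩ := (ConvexCone.mem_hull_of_convex hs).1 hmem
    obtain ⟨y, hy, hle⟩ := h d hd
    exact ⟨y, hy, by simpa [real_inner_smul_left] using mul_le_mul_of_nonneg_left hle hr.le⟩
  obtain ⟨y, hy, hle⟩ := closure_minimal hcone (isClosed_setOf_exists_inner_le hS x) hw
  have := hf_neg _ ⟨y, subset_convexHull ℝ S hy, rfl⟩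
  rw [← hwf, inner_add_right, inner_neg_right] at this
  linarith

end InnerProductSpace

section Envelope

variable {n : ℕ} {K Ω : Set (Euc n)} {u : Euc n → ℝ} {ξ x x₀ y : Euc n}

theorem add_inner_le_of_mem_Sset (hx₀ : x₀ ∈ Sset Ω u ξ) (hy : y ∈ closure Ω) :
    u x₀ - ⟪ξ, x₀⟫ + ⟪ξ, y⟫ ≤ u y := by
  linarith [hx₀.2 y hy]

theorem bddAbove_minorant_values (hK : Bornology.IsBounded K) (hx₀ : x₀ ∈ closure Ω)
    (x : Euc n) :
    BddAbove {z : ℝ | ∃ a : ℝ, ∃ ξ ∈ K, (∀ y ∈ closure Ω, a + ⟪ξ, y⟫ ≤ u y) ∧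
      z = a + ⟪ξ, x⟫} := by
  obtain ⟨C, hC⟩ := isBounded_iff_forall_norm_le.1 hK
  refine ⟨u x₀ + C * ‖x - x₀‖, ?_⟩
  rintro _ ⟨a, ξ, hξ, ha, rfl⟩
  have hCS : ⟪ξ, x - x₀⟫ ≤ C * ‖x - x₀‖ :=
    (real_inner_le_norm _ _).trans (mul_le_mul_of_nonneg_right (hC ξ hξ) (norm_nonneg _))
  rw [inner_sub_right] at hCS
  linarith [ha x₀ hx₀]

theorem le_KEnv_of_mem_Sset (hK : Bornology.IsBounded K) (hξ : ξ ∈ K)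
    (hx₀ : x₀ ∈ Sset Ω u ξ) (x : Euc n) :
    u x₀ - ⟪ξ, x₀⟫ + ⟪ξ, x⟫ ≤ KEnv K Ω u x :=
  le_csSup (bddAbove_minorant_values hK hx₀.1 x)
    ⟨_, ξ, hξ, fun _ hy ↦ add_inner_le_of_mem_Sset hx₀ hy, rfl⟩

theorem KEnv_le_of_mem_closure (hξ : ξ ∈ K) (hx₀ : x₀ ∈ Sset Ω u ξ) (hy : y ∈ closure Ω) :
    KEnv K Ω u y ≤ u y :=
  csSup_le ⟨_, _, ξ, hξ, fun _ hz ↦ add_inner_le_of_mem_Sset hx₀ hz, rfl⟩ <| by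
    rintro _ ⟨a, ξ', -, ha, rfl⟩
    exact ha y hy

theorem KEnv_eq_of_mem_Sset (hK : Bornology.IsBounded K) (hξ : ξ ∈ K) (hx : x ∈ Sset Ω u ξ) :
    KEnv K Ω u x = u x :=
  le_antisymm (KEnv_le_of_mem_closure hξ hx hx.1) (by simpa using le_KEnv_of_mem_Sset hK hξ hx x)

theorem mem_subdiff_KEnv_of_mem_Sset (hK : Bornology.IsBounded K) (hξ : ξ ∈ K)
    (hx : x ∈ Sset Ω u ξ) : ξ ∈ subdiff (KEnv K Ω u) x := fun y ↦ by
  rw [KEnv_eq_of_mem_Sset hK hξ hx, inner_sub_right]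
  linarith [le_KEnv_of_mem_Sset hK hξ hx y]

theorem mem_Sset_of_tendsto {ι : Type*} {l : Filter ι} [l.NeBot]
    (hu : ContinuousOn u (closure Ω)) {ξs ys : ι → Euc n} (hξs : Tendsto ξs l (𝓝 ξ))
    (hys : Tendsto ys l (𝓝 y)) (hmem : ∀ i, ys i ∈ Sset Ω u (ξs i)) : y ∈ Sset Ω u ξ := by
  have hcl : ∀ᶠ i in l, ys i ∈ closure Ω := .of_forall fun i ↦ (hmem i).1
  have hy : y ∈ closure Ω := isClosed_closure.mem_of_tendsto hys hcl
  have huy : Tendsto (fun i ↦ u (ys i)) l (𝓝 (u y)) :=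
    (hu y hy).tendsto.comp (tendsto_nhdsWithin_iff.2 ⟨hys, hcl⟩)
  exact ⟨hy, fun z hz ↦ le_of_tendsto_of_tendsto' (huy.sub (hξs.inner hys))
    (tendsto_const_nhds.sub (hξs.inner tendsto_const_nhds)) fun i ↦ (hmem i).2 z hz⟩

theorem isCompact_Sset (hΩ : IsCompact (closure Ω)) (hu : ContinuousOn u (closure Ω))
    (ξ : Euc n) : IsCompact (Sset Ω u ξ) := by
  refine hΩ.of_isClosed_subset (isClosed_of_closure_subset fun y hy ↦ ?_) fun _ hx ↦ hx.1
  obtain ⟨ys, hmem, hys⟩ := mem_closure_iff_seq_limit.1 hy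
  exact mem_Sset_of_tendsto hu tendsto_const_nhds hys hmem

theorem Sset_nonempty (hΩ : IsCompact (closure Ω)) (hne : (closure Ω).Nonempty)
    (hu : ContinuousOn u (closure Ω)) (ξ : Euc n) : (Sset Ω u ξ).Nonempty := by
  obtain ⟨x₀, hx₀, hmin⟩ :=
    hΩ.exists_isMinOn hne (hu.sub (continuous_const.inner continuous_id).continuousOn)
  exact ⟨x₀, hx₀, fun y hy ↦ hmin hy⟩

theorem KEnv_eq_of_mem_subdiff (hK : Bornology.IsBounded K) (hξ : ξ ∈ K)
    (hsub : ξ ∈ subdiff (KEnv K Ω u) x) (hx₀ : x₀ ∈ Sset Ω u ξ) :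
    KEnv K Ω u x = u x₀ - ⟪ξ, x₀⟫ + ⟪ξ, x⟫ := by
  refine le_antisymm ?_ (le_KEnv_of_mem_Sset hK hξ hx₀ x)
  have := hsub x₀
  rw [KEnv_eq_of_mem_Sset hK hξ hx₀, inner_sub_right] at this
  linarith

theorem inner_le_inner_of_mem_Sset_add_smul (hK : Bornology.IsBounded K) (hξ : ξ ∈ K)
    (hsub : ξ ∈ subdiff (KEnv K Ω u) x) (hx₀ : x₀ ∈ Sset Ω u ξ) {d : Euc n} {t : ℝ}
    (ht : 0 < t) (hξt : ξ + t • d ∈ K) (hy : y ∈ Sset Ω u (ξ + t • d)) :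
    ⟪d, x⟫ ≤ ⟪d, y⟫ := by
  have hle := le_KEnv_of_mem_Sset hK hξt hy x
  rw [KEnv_eq_of_mem_subdiff hK hξ hsub hx₀] at hle
  simp only [inner_add_left, real_inner_smul_left] at hle
  have := hx₀.2 y hy.1
  exact le_of_mul_le_mul_left (by linarith) ht

theorem exists_mem_Sset_inner_le (hK : Bornology.IsBounded K) (hKcv : Convex ℝ K)
    (hΩ : IsCompact (closure Ω)) (hu : ContinuousOn u (closure Ω)) (hξ : ξ ∈ K)
    (hsub : ξ ∈ subdiff (KEnv K Ω u) x) (hx₀ : x₀ ∈ Sset Ω u ξ) {ξ' : Euc n} (hξ' : ξ' ∈ K) :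
    ∃ y ∈ Sset Ω u ξ, ⟪ξ' - ξ, x⟫ ≤ ⟪ξ' - ξ, y⟫ := by
  set t : ℕ → ℝ := fun k ↦ 1 / (k + 1)
  have ht (k : ℕ) : 0 < t k := by positivity
  have hξt (k : ℕ) : ξ + t k • (ξ' - ξ) ∈ K :=
    hKcv.add_smul_sub_mem hξ hξ' ⟨(ht k).le, div_le_one_of_le₀ (by simp) (by positivity)⟩
  choose ys hys using fun k ↦ Sset_nonempty hΩ ⟨x₀, hx₀.1⟩ hu (ξ + t k • (ξ' - ξ))
  obtain ⟨y, -, φ, hφ, hlim⟩ := hΩ.tendsto_subseq fun k ↦ (hys k).1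
  have hξlim : Tendsto (fun k ↦ ξ + t (φ k) • (ξ' - ξ)) atTop (𝓝 ξ) := by
    have ht0 : Tendsto (fun k ↦ t (φ k)) atTop (𝓝 0) :=
      tendsto_one_div_add_atTop_nhds_zero_nat.comp hφ.tendsto_atTop
    simpa using tendsto_const_nhds.add (ht0.smul_const (ξ' - ξ))
  refine ⟨y, mem_Sset_of_tendsto hu hξlim hlim fun k ↦ hys (φ k), ?_⟩
  exact ge_of_tendsto (tendsto_const_nhds.inner hlim) (.of_forall fun k ↦
    inner_le_inner_of_mem_Sset_add_smul hK hξ hsub hx₀ (ht _) (hξt _) (hys (φ k)))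

theorem exists_mem_normalCone_sub_mem_convexHull_Sset (hK : Bornology.IsBounded K)
    (hKcv : Convex ℝ K) (hΩ : IsCompact (closure Ω)) (hne : (closure Ω).Nonempty)
    (hu : ContinuousOn u (closure Ω)) (hξ : ξ ∈ K) (hsub : ξ ∈ subdiff (KEnv K Ω u) x) :
    ∃ v ∈ normalCone K ξ, x - v ∈ convexHull ℝ (Sset Ω u ξ) := by
  obtain ⟨x₀, hx₀⟩ := Sset_nonempty hΩ hne hu ξ
  have hdir : ∀ d ∈ (fun ξ' ↦ -ξ + ξ') '' K, ∃ y ∈ Sset Ω u ξ, ⟪d, x⟫ ≤ ⟪d, y⟫ := by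
    rintro _ ⟨ξ', hξ', rfl⟩
    simpa only [neg_add_eq_sub] using exists_mem_Sset_inner_le hK hKcv hΩ hu hξ hsub hx₀ hξ'
  obtain ⟨c, hc, hcx⟩ := exists_mem_convexHull_forall_inner_le (isCompact_Sset hΩ hu ξ)
    (hKcv.translate (-ξ)) ⟨ξ, hξ, neg_add_cancel ξ⟩ hdir
  refine ⟨x - c, fun ξ' hξ' ↦ ?_, by rwa [sub_sub_cancel]⟩
  have : ⟪ξ' - ξ, x⟫ ≤ ⟪ξ' - ξ, c⟫ := by simpa only [neg_add_eq_sub] using hcx _ ⟨ξ', hξ', rfl⟩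
  rw [inner_sub_left, real_inner_comm _ x, real_inner_comm _ c]
  linarith

end Envelope

theorem stmt_7_general {n : ℕ} (K Ω : Set (Euc n)) (u : Euc n → ℝ)
    (hKcp : IsCompact K) (hKcv : Convex ℝ K)
    (hΩb : Bornology.IsBounded Ω) (hΩne : Ω.Nonempty)
    (hu : ContinuousOn u (closure Ω)) :
    -- (a)
    (∀ ξ ∈ K, ∀ xξ ∈ Sset Ω u ξ,
      KEnv K Ω u xξ = u xξ ∧ ξ ∈ subdiff (KEnv K Ω u) xξ) ∧
    -- (b)
    (∀ x : Euc n, ∀ ξ ∈ subdiff (KEnv K Ω u) x ∩ K,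
      ∃ v ∈ normalCone K ξ, x - v ∈ convexHull ℝ (Sset Ω u ξ)) :=
  ⟨fun _ hξ _ hxξ ↦ ⟨KEnv_eq_of_mem_Sset hKcp.isBounded hξ hxξ,
      mem_subdiff_KEnv_of_mem_Sset hKcp.isBounded hξ hxξ⟩,
    fun _ _ ⟨hsub, hξ⟩ ↦ exists_mem_normalCone_sub_mem_convexHull_Sset hKcp.isBounded hKcv
      hΩb.isCompact_closure hΩne.closure hu hξ hsub⟩

/-- Contact set and tangency properties of the `K`-envelope. -/
theorem stmt_7 {n : ℕ} (K Ω : Set (Euc n)) (u : Euc n → ℝ)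
    (hKcp : IsCompact K) (hKcv : Convex ℝ K) (hKne : K.Nonempty)
    (hΩo : IsOpen Ω) (hΩb : Bornology.IsBounded Ω) (hΩne : Ω.Nonempty)
    (hu : ContinuousOn u (closure Ω)) (hu2 : ContDiffOn ℝ 2 u Ω) :
    -- (a)
    (∀ ξ ∈ K, ∀ xξ ∈ Sset Ω u ξ,
      KEnv K Ω u xξ = u xξ ∧ ξ ∈ subdiff (KEnv K Ω u) xξ) ∧
    -- (b)
    (∀ x : Euc n, ∀ ξ ∈ subdiff (KEnv K Ω u) x ∩ K,
      ∃ v ∈ normalCone K ξ, x - v ∈ convexHull ℝ (Sset Ω u ξ)) :=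
  stmt_7_general K Ω u hKcp hKcv hΩb hΩne hu
end
end

section
/- For every γ ≥ 0 there is a constant C_γ > 0 such that the following holds. Let E ⊆ [0,∞) be a finite union of pairwise disjoint nondegenerate compact intervals, and let ∂E denote its finite set of boundary points. Then for every l with 3/4 ≤ l ≤ 5/4 one has ∫_{E Δ [0,l]} t^γ dt ≤ C_γ ( ∫_{[0,1/2] \ E} t^γ dt + ∑_{t ∈ ∂E} t^γ |l − t| ). -/
/-!
Split `E Δ [0,l]` into `E \ [0,l]`, `[0,1/2] \ E` and `(1/2,l] \ E`. On each interval
`[aᵢ,bᵢ]` of `E` the part beyond `l` costs at most `bᵢ^γ |l - bᵢ|`, and the `bᵢ` are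
distinct boundary points. For the last piece, either some interval of `E` meets `[1/4,1/2]`,
so that `(1/2,l] \ E ⊆ (bᵢ,l]` with `bᵢ ≥ 1/4` and the boundary term at `bᵢ` pays for it,
or `E` misses `[1/4,1/2]`, and then `∫_{[0,1/2] \ E} t^γ dt ≥ 4^{-γ-1}`.
-/

open Set MeasureTheory

theorem sum_le_finsum_mem_of_injective {ι α M : Type*} [Fintype ι] [AddCommMonoid M]
    [PartialOrder M] [IsOrderedAddMonoid M] {f : ι → α} (hf : Function.Injective f) {s : Set α}
    (hs : s.Finite) (hfs : ∀ i, f i ∈ s) {g : α → M} (hg : ∀ x ∈ s, 0 ≤ g x) :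
    ∑ i, g (f i) ≤ ∑ᶠ x ∈ s, g x := by
  classical
  rw [finsum_mem_eq_finite_toFinset_sum _ hs, ← Finset.sum_image fun i _ j _ h => hf h]
  refine Finset.sum_le_sum_of_subset_of_nonneg ?_ fun x hx _ => hg x (hs.mem_toFinset.1 hx)
  simpa [Finset.subset_iff] using hfs

theorem mem_frontier_of_subset_Iic_union {α : Type*} [TopologicalSpace α] [LinearOrder α]
    [OrderTopology α] [DenselyOrdered α] [NoMaxOrder α] {s F : Set α} {b : α} (hb : b ∈ s)
    (hF : IsClosed F) (hbF : b ∉ F) (hs : s ⊆ Iic b ∪ F) : b ∈ frontier s := by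
  refine ⟨subset_closure hb, fun hint => ?_⟩
  have hsub : interior s ∩ Fᶜ ⊆ Iic b := fun x ⟨hxs, hxF⟩ =>
    (hs (interior_subset hxs)).resolve_right hxF
  have hb_int : b ∈ interior (Iic b) := interior_mono hsub <|
    (isOpen_interior.inter hF.isOpen_compl).subset_interior_iff.2 le_rfl ⟨hint, hbF⟩
  rw [interior_Iic] at hb_int
  exact lt_irrefl b hb_int

theorem setIntegral_symmDiff_Icc_eq {f : ℝ → ℝ} {E : Set ℝ} (hE : MeasurableSet E)
    (hfE : IntegrableOn f E) {a c l : ℝ} (hfl : IntegrableOn f (Icc a l)) (hac : a ≤ c)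
    (hcl : c ≤ l) :
    ∫ t in symmDiff E (Icc a l), f t =
      (∫ t in E \ Icc a l, f t) + ((∫ t in Icc a c \ E, f t) + ∫ t in Ioc c l \ E, f t) := by
  have hsplit : Icc a l \ E = (Icc a c \ E) ∪ (Ioc c l \ E) := by
    rw [← Icc_union_Ioc_eq_Icc hac hcl, union_sdiff_distrib]
  rw [Set.symmDiff_def, setIntegral_union disjoint_sdiff_sdiff (measurableSet_Icc.diff hE)
      (hfE.mono_set sdiff_subset) (hfl.mono_set sdiff_subset), hsplit,
    setIntegral_union ((Iic_disjoint_Ioi le_rfl).mono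
      (sdiff_subset.trans Icc_subset_Iic_self) (sdiff_subset.trans Ioc_subset_Ioi_self))
      (measurableSet_Ioc.diff hE)
      (hfl.mono_set (sdiff_subset.trans (Icc_subset_Icc le_rfl hcl)))
      (hfl.mono_set (sdiff_subset.trans (Ioc_subset_Icc_self.trans (Icc_subset_Icc hac le_rfl))))]

section Rpow

variable {γ : ℝ}

theorem setIntegral_rpow_le_of_subset_Ioc (hγ : 0 ≤ γ) {s : Set ℝ} {p q : ℝ} (hp : 0 ≤ p)
    (hq : 0 ≤ q) (hs : s ⊆ Ioc p q) : ∫ t in s, t ^ γ ≤ q ^ γ * |q - p| := by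
  have hbound : ∀ t ∈ s, ‖t ^ γ‖ ≤ q ^ γ := fun t ht => by
    have ht0 : 0 ≤ t := hp.trans (hs ht).1.le
    rw [Real.norm_of_nonneg (Real.rpow_nonneg ht0 γ)]
    exact Real.rpow_le_rpow ht0 (hs ht).2 hγ
  calc ∫ t in s, t ^ γ ≤ ‖∫ t in s, t ^ γ‖ := Real.le_norm_self _
    _ ≤ q ^ γ * volume.real s :=
      norm_setIntegral_le_of_norm_le_const ((measure_mono hs).trans_lt measure_Ioc_lt_top) hbound
    _ ≤ q ^ γ * volume.real (Ioc p q) := by gcongr; exact measure_Ioc_lt_top.ne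
    _ ≤ q ^ γ * |q - p| := by
      rw [Real.volume_real_Ioc]
      gcongr
      exact max_le (le_abs_self _) (abs_nonneg _)

theorem rpow_mul_sub_le_setIntegral_Icc (hγ : 0 ≤ γ) {p q : ℝ} (hp : 0 ≤ p)
    (hpq : p ≤ q) : p ^ γ * (q - p) ≤ ∫ t in Icc p q, t ^ γ := by
  have h := setIntegral_ge_of_const_le_real (s := Icc p q) (μ := volume) measurableSet_Icc
    measure_Icc_lt_top.ne (fun t ht => Real.rpow_le_rpow hp ht.1 hγ)
    (Real.continuous_rpow_const hγ).integrableOn_Icc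
  rwa [Real.volume_real_Icc_of_le hpq] at h

theorem setIntegral_Ioc_diff_le_of_Icc_subset (hγ : 0 ≤ γ) {E : Set ℝ} {a b l : ℝ}
    (ha : a ≤ 1 / 2) (hb : 1 / 4 ≤ b) (hE : Icc a b ⊆ E) (hl₀ : 0 ≤ l)
    (hl : l ≤ 5 / 4) :
    ∫ t in Ioc (1 / 2) l \ E, t ^ γ ≤ 5 ^ γ * (b ^ γ * |l - b|) := by
  have hsub : Ioc (1 / 2) l \ E ⊆ Ioc b l := fun x ⟨⟨hx, hxl⟩, hxE⟩ =>
    ⟨not_le.1 fun hxb => hxE (hE ⟨ha.trans hx.le, hxb⟩), hxl⟩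
  calc ∫ t in Ioc (1 / 2) l \ E, t ^ γ ≤ l ^ γ * |l - b| :=
        setIntegral_rpow_le_of_subset_Ioc hγ (by linarith) hl₀ hsub
    _ ≤ (5 * b) ^ γ * |l - b| := by gcongr; linarith
    _ = 5 ^ γ * (b ^ γ * |l - b|) := by
      rw [Real.mul_rpow (by norm_num) (by linarith)]; ring

theorem setIntegral_Ioc_diff_le_of_disjoint (hγ : 0 ≤ γ) {E : Set ℝ} {l : ℝ}
    (hE : Disjoint (Icc (1 / 4) (1 / 2)) E) (hl₀ : 0 ≤ l) (hl : l ≤ 5 / 4) :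
    ∫ t in Ioc (1 / 2) l \ E, t ^ γ ≤ 3 * 5 ^ γ * ∫ t in Icc 0 (1 / 2) \ E, t ^ γ := by
  have hgap : Icc (1 / 4 : ℝ) (1 / 2) ⊆ Icc 0 (1 / 2) \ E := fun x hx =>
    ⟨Icc_subset_Icc (by norm_num) le_rfl hx, disjoint_left.1 hE hx⟩
  have hlower : (1 / 4 : ℝ) ^ γ * (1 / 4) ≤ ∫ t in Icc 0 (1 / 2) \ E, t ^ γ := by
    calc (1 / 4 : ℝ) ^ γ * (1 / 4) = (1 / 4) ^ γ * (1 / 2 - 1 / 4) := by norm_num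
      _ ≤ ∫ t in Icc (1 / 4) (1 / 2), t ^ γ :=
        rpow_mul_sub_le_setIntegral_Icc hγ (by norm_num) (by norm_num)
      _ ≤ ∫ t in Icc 0 (1 / 2) \ E, t ^ γ :=
        setIntegral_mono_set
          ((Real.continuous_rpow_const hγ).integrableOn_Icc.mono_set sdiff_subset)
          (ae_restrict_of_ae_restrict_of_subset sdiff_subset <|
            ae_restrict_of_forall_mem measurableSet_Icc fun t ht => Real.rpow_nonneg ht.1 γ)
          hgap.eventuallyLE
  calc ∫ t in Ioc (1 / 2) l \ E, t ^ γ ≤ l ^ γ * |l - 1 / 2| :=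
        setIntegral_rpow_le_of_subset_Ioc hγ (by norm_num) hl₀ sdiff_subset
    _ ≤ (5 * (1 / 4)) ^ γ * (3 / 4) := by
      gcongr
      · linarith
      · exact abs_le.2 ⟨by linarith, by linarith⟩
    _ = 3 * 5 ^ γ * ((1 / 4) ^ γ * (1 / 4)) := by
      rw [Real.mul_rpow (by norm_num) (by norm_num)]; ring
    _ ≤ 3 * 5 ^ γ * ∫ t in Icc 0 (1 / 2) \ E, t ^ γ := by gcongr

end Rpow

section FiniteUnionIcc

variable {ι : Type*} {a b : ι → ℝ}

theorem frontier_iUnion_Icc_subset [Finite ι] :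
    frontier (⋃ i, Icc (a i) (b i)) ⊆ range a ∪ range b := by
  intro t ht
  obtain ⟨i, hai, hbi⟩ := mem_iUnion.1
    ((isClosed_iUnion_of_finite fun i => isClosed_Icc).frontier_subset ht)
  by_contra hne
  simp only [mem_union, mem_range, not_or, not_exists] at hne
  have ht_Ioo : t ∈ Ioo (a i) (b i) :=
    ⟨hai.lt_of_ne fun h => hne.1 i h, hbi.lt_of_ne fun h => hne.2 i h.symm⟩
  exact ht.2 <| mem_interior.2 ⟨Ioo (a i) (b i),
    Ioo_subset_Icc_self.trans (subset_iUnion (fun j => Icc (a j) (b j)) i), isOpen_Ioo, ht_Ioo⟩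

theorem right_mem_frontier_iUnion_Icc [Finite ι]
    (hdisj : Pairwise fun i j => Disjoint (Icc (a i) (b i)) (Icc (a j) (b j))) {i : ι}
    (hi : a i ≤ b i) : b i ∈ frontier (⋃ j, Icc (a j) (b j)) := by
  have hb : b i ∈ Icc (a i) (b i) := right_mem_Icc.2 hi
  refine mem_frontier_of_subset_Iic_union (mem_iUnion_of_mem i hb)
    (F := ⋃ j ∈ {j | j ≠ i}, Icc (a j) (b j))
    ((toFinite _).isClosed_biUnion fun j _ => isClosed_Icc) ?_ ?_
  · simp only [mem_iUnion]
    rintro ⟨j, hji, hbj⟩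
    exact disjoint_left.1 (hdisj hji) hbj hb
  · refine iUnion_subset fun j => ?_
    rcases eq_or_ne j i with rfl | hji
    · exact Icc_subset_Iic_self.trans subset_union_left
    · exact (subset_biUnion_of_mem (u := fun j => Icc (a j) (b j)) hji).trans subset_union_right

theorem sum_le_finsum_frontier_iUnion_Icc [Fintype ι] {M : Type*} [AddCommMonoid M]
    [PartialOrder M] [IsOrderedAddMonoid M] (hab : ∀ i, a i ≤ b i)
    (hdisj : Pairwise fun i j => Disjoint (Icc (a i) (b i)) (Icc (a j) (b j))) {g : ℝ → M}
    (hg : ∀ x ∈ frontier (⋃ i, Icc (a i) (b i)), 0 ≤ g x) :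
    ∑ i, g (b i) ≤ ∑ᶠ x ∈ frontier (⋃ i, Icc (a i) (b i)), g x := by
  have hinj : Function.Injective b := fun i j hij => by_contra fun hne =>
    disjoint_left.1 (hdisj hne) (right_mem_Icc.2 (hab i))
      (by rw [hij]; exact right_mem_Icc.2 (hab j))
  exact sum_le_finsum_mem_of_injective hinj
    (((finite_range a).union (finite_range b)).subset frontier_iUnion_Icc_subset)
    (fun i => right_mem_frontier_iUnion_Icc hdisj (hab i)) hg

variable {γ : ℝ}

theorem setIntegral_iUnion_Icc_diff_Icc_le [Fintype ι] (hγ : 0 ≤ γ) (ha : ∀ i, 0 ≤ a i)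
    (hab : ∀ i, a i ≤ b i)
    (hdisj : Pairwise fun i j => Disjoint (Icc (a i) (b i)) (Icc (a j) (b j))) {l : ℝ}
    (hl : 0 ≤ l) :
    ∫ t in (⋃ i, Icc (a i) (b i)) \ Icc 0 l, t ^ γ ≤ ∑ i, b i ^ γ * |l - b i| := by
  have hint : IntegrableOn (fun t : ℝ => t ^ γ) (⋃ i, Icc (a i) (b i) \ Icc 0 l) :=
    ((Real.continuous_rpow_const hγ).locallyIntegrable.integrableOn_isCompact
      (isCompact_iUnion fun i => isCompact_Icc)).mono_set (iUnion_mono fun i => sdiff_subset)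
  rw [iUnion_sdiff, integral_iUnion (fun i => measurableSet_Icc.diff measurableSet_Icc)
    (hdisj.mono fun i j h => h.mono sdiff_subset sdiff_subset) hint, tsum_fintype]
  refine Finset.sum_le_sum fun i _ => ?_
  rw [abs_sub_comm]
  exact setIntegral_rpow_le_of_subset_Ioc hγ hl ((ha i).trans (hab i))
    fun x ⟨hx, hxl⟩ => ⟨not_le.1 fun h => hxl ⟨(ha i).trans hx.1, h⟩, hx.2⟩

theorem setIntegral_Ioc_diff_iUnion_Icc_le [Fintype ι] (hγ : 0 ≤ γ) (ha : ∀ i, 0 ≤ a i)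
    (hab : ∀ i, a i ≤ b i) {l : ℝ} (hl₀ : 0 ≤ l) (hl : l ≤ 5 / 4) :
    ∫ t in Ioc (1 / 2) l \ ⋃ i, Icc (a i) (b i), t ^ γ ≤
      3 * 5 ^ γ * ((∫ t in Icc 0 (1 / 2) \ ⋃ i, Icc (a i) (b i), t ^ γ) +
        ∑ i, b i ^ γ * |l - b i|) := by
  have hI : 0 ≤ ∫ t in Icc 0 (1 / 2) \ ⋃ i, Icc (a i) (b i), t ^ γ :=
    setIntegral_nonneg (measurableSet_Icc.diff (.iUnion fun i => measurableSet_Icc))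
      fun t ht => Real.rpow_nonneg ht.1.1 γ
  have hterm : ∀ i, 0 ≤ b i ^ γ * |l - b i| := fun i => by
    have := (ha i).trans (hab i); positivity
  have hS : 0 ≤ ∑ i, b i ^ γ * |l - b i| := Finset.sum_nonneg fun i _ => hterm i
  have h5 : (0 : ℝ) < 5 ^ γ := by positivity
  by_cases h : ∃ i, a i ≤ 1 / 2 ∧ 1 / 4 ≤ b i
  · obtain ⟨i, hai, hbi⟩ := h
    calc _ ≤ 5 ^ γ * (b i ^ γ * |l - b i|) :=
          setIntegral_Ioc_diff_le_of_Icc_subset hγ hai hbi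
            (subset_iUnion (fun j => Icc (a j) (b j)) i) hl₀ hl
      _ ≤ 5 ^ γ * ∑ j, b j ^ γ * |l - b j| := by
        gcongr
        exact Finset.single_le_sum (fun j _ => hterm j) (Finset.mem_univ i)
      _ ≤ _ := by linarith [mul_nonneg h5.le hI, mul_nonneg h5.le hS]
  · push Not at h
    have hgap : Disjoint (Icc (1 / 4) (1 / 2)) (⋃ i, Icc (a i) (b i)) :=
      disjoint_left.2 fun x hx hxE => by
        obtain ⟨i, hi⟩ := mem_iUnion.1 hxE
        linarith [h i (hi.1.trans hx.2), hi.2, hx.1]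
    calc _ ≤ 3 * 5 ^ γ * ∫ t in Icc 0 (1 / 2) \ ⋃ i, Icc (a i) (b i), t ^ γ :=
          setIntegral_Ioc_diff_le_of_disjoint hγ hgap hl₀ hl
      _ ≤ _ := by gcongr; exact le_add_of_nonneg_right hS

end FiniteUnionIcc

/-- One-dimensional lemma: for a finite union `E` of pairwise disjoint nondegenerate
compact intervals in `[0, ∞)` and `3/4 ≤ l ≤ 5/4`,
`∫_{E Δ [0,l]} t^γ dt ≤ C_γ (∫_{[0,1/2] \ E} t^γ dt + ∑_{t ∈ ∂E} t^γ |l − t|)`. -/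
theorem stmt_15 (γ : ℝ) (hγ : 0 ≤ γ) :
    ∃ C : ℝ, 0 < C ∧
      ∀ (m : ℕ) (a b : Fin m → ℝ),
        (∀ i, 0 ≤ a i ∧ a i < b i) →
        (Pairwise fun i j => Disjoint (Icc (a i) (b i)) (Icc (a j) (b j))) →
        ∀ E : Set ℝ, E = ⋃ i, Icc (a i) (b i) →
        ∀ l : ℝ, 3 / 4 ≤ l → l ≤ 5 / 4 →
          (∫ t in symmDiff E (Icc 0 l), t ^ γ) ≤
            C * ((∫ t in Icc 0 (1 / 2) \ E, t ^ γ) +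
              ∑ᶠ t ∈ frontier E, t ^ γ * |l - t|) := by
  refine ⟨1 + 3 * 5 ^ γ, by positivity, ?_⟩
  rintro m a b hab hdisj E rfl l hl₁ hl₂
  have ha : ∀ i, 0 ≤ a i := fun i => (hab i).1
  have hab' : ∀ i, a i ≤ b i := fun i => (hab i).2.le
  have hcont : Continuous fun t : ℝ => t ^ γ := Real.continuous_rpow_const hγ
  have hcompact : IsCompact (⋃ i, Icc (a i) (b i)) := isCompact_iUnion fun i => isCompact_Icc
  have hS := sum_le_finsum_frontier_iUnion_Icc hab' hdisj (g := fun t => t ^ γ * |l - t|)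
    fun x hx => by
      obtain ⟨i, hi⟩ := mem_iUnion.1 (hcompact.isClosed.frontier_subset hx)
      exact mul_nonneg (Real.rpow_nonneg ((ha i).trans hi.1) γ) (abs_nonneg _)
  have hD := setIntegral_iUnion_Icc_diff_Icc_le hγ ha hab' hdisj (by linarith : 0 ≤ l)
  have hM := setIntegral_Ioc_diff_iUnion_Icc_le hγ ha hab' (by linarith) hl₂
  have hK : (0 : ℝ) ≤ 3 * 5 ^ γ := by positivity
  rw [setIntegral_symmDiff_Icc_eq hcompact.measurableSet
    (hcont.locallyIntegrable.integrableOn_isCompact hcompact) hcont.integrableOn_Icc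
    (by norm_num : (0 : ℝ) ≤ 1 / 2) (by linarith)]
  linarith [mul_le_mul_of_nonneg_left hS hK]
end

section
/- Let m ≥ 1, let λ₁, …, λ_m be positive real numbers with s := λ₁ + ⋯ + λ_m ≥ 1, and let x₁, …, x_m be nonnegative real numbers. If ∑_{i=1}^m λ_i x_i ≤ c s for some c > 0, then ∑_{i=1}^m λ_i (x_i − c)² ≤ (8/3) · ( c^{2−s} s³ / (min_{1≤i≤m} λ_i)² ) · ( c^s − x₁^{λ₁} ⋯ x_m^{λ_m} ). -/
/-!
Writing `xᵢ = c yᵢ` reduces the inequality to `c = 1`, with `∑ λᵢ yᵢ ≤ s`. Then every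
`yᵢ ≤ M := s / min λ`, and on `(0, M]` one has `log y ≤ (y - 1) - (y - 1)² / (2M)`. Weighting by
`λᵢ` and summing, the constraint `∑ λᵢ (yᵢ - 1) ≤ 0` leaves `∏ yᵢ ^ λᵢ ≤ exp (-Q / (2M))` with
`Q = ∑ λᵢ (yᵢ - 1)²`. As `Q ≤ s M²`, the exponent lies in `[-sM/2, 0]` with `sM/2 ≥ 1/2`, and on
that interval `exp` lies below its chord; with `exp (-1/2) ≤ 5/8` this gives
`1 - ∏ yᵢ ^ λᵢ ≥ (3/8) Q / (s M²)`.
-/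

namespace Real

theorem hasDerivAt_sub_one_sub_sq_div_sub_log (M : ℝ) {t : ℝ} (ht : 0 < t) (hM : M ≠ 0) :
    HasDerivAt (fun y ↦ y - 1 - (y - 1) ^ 2 / (2 * M) - log y)
      ((t - 1) * (M - t) / (t * M)) t := by
  have h := (((hasDerivAt_id' t).sub_const 1).sub
    ((((hasDerivAt_id' t).sub_const 1).pow 2).div_const (2 * M))).sub (hasDerivAt_log ht.ne')
  refine h.congr_deriv ?_
  field_simp
  ring

/-- By the sign of its derivative `(y - 1)(M - y) / (yM)`, the difference of the two sides
decreases on `(0, 1]` and increases on `[1, M]`, and it vanishes at `1`. -/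
theorem log_le_sub_one_sub_sq_div {M y : ℝ} (hM : 1 ≤ M) (hy : 0 < y) (hyM : y ≤ M) :
    log y ≤ y - 1 - (y - 1) ^ 2 / (2 * M) := by
  set f : ℝ → ℝ := fun y ↦ y - 1 - (y - 1) ^ 2 / (2 * M) - log y
  set f' : ℝ → ℝ := fun t ↦ (t - 1) * (M - t) / (t * M)
  have hf' : ∀ t, 0 < t → HasDerivAt f (f' t) t :=
    fun t ht ↦ hasDerivAt_sub_one_sub_sq_div_sub_log M ht (by positivity)
  have hcont : ∀ a, 0 < a → ∀ b, ContinuousOn f (Set.Icc a b) := fun a ha b t ht ↦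
    (hf' t (ha.trans_le ht.1)).continuousAt.continuousWithinAt
  suffices 0 ≤ f y by simp only [f] at this; linarith
  have hf1 : f 1 = 0 := by simp [f]
  rcases le_total y 1 with h | h
  · have hanti : AntitoneOn f (Set.Icc y 1) := by
      refine antitoneOn_of_hasDerivWithinAt_nonpos (f' := f') (convex_Icc _ _) (hcont y hy 1)
        (fun t ht ↦ ?_) fun t ht ↦ ?_ <;> rw [interior_Icc] at ht
      · exact (hf' t (hy.trans ht.1)).hasDerivWithinAt
      · have : 0 < t := hy.trans ht.1
        exact div_nonpos_of_nonpos_of_nonneg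
          (mul_nonpos_of_nonpos_of_nonneg (by linarith [ht.2]) (by linarith [ht.2]))
          (by positivity)
    simpa [hf1] using hanti (Set.left_mem_Icc.2 h) (Set.right_mem_Icc.2 h) h
  · have hmono : MonotoneOn f (Set.Icc 1 y) := by
      refine monotoneOn_of_hasDerivWithinAt_nonneg (f' := f') (convex_Icc _ _) (hcont 1 one_pos y)
        (fun t ht ↦ ?_) fun t ht ↦ ?_ <;> rw [interior_Icc] at ht
      · exact (hf' t (one_pos.trans ht.1)).hasDerivWithinAt
      · have : 0 < t := one_pos.trans ht.1
        exact div_nonneg (mul_nonneg (by linarith [ht.1]) (by linarith [ht.2])) (by positivity)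
    simpa [hf1] using hmono (Set.left_mem_Icc.2 h) (Set.right_mem_Icc.2 h) h

theorem exp_neg_one_half_le : exp (-(1 / 2)) ≤ 5 / 8 := by
  rw [exp_neg, inv_le_comm₀ (exp_pos _) (by norm_num)]
  linarith [quadratic_le_exp_of_nonneg (x := 1 / 2) (by norm_num)]

theorem exp_neg_le_one_sub_of_le {u U : ℝ} (hu : 0 ≤ u) (huU : u ≤ U) (hU : 1 / 2 ≤ U) :
    exp (-u) ≤ 1 - 3 / 8 * (u / U) := by
  have hU0 : 0 < U := by linarith
  have hθ : u / U ≤ 1 := (div_le_one hU0).2 huU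
  have hθ0 : 0 ≤ u / U := div_nonneg hu hU0.le
  have hchord := convexOn_exp.2 (Set.mem_univ 0) (Set.mem_univ (-U)) (sub_nonneg.2 hθ) hθ0
    (by ring)
  have hpt : (1 - u / U) • (0 : ℝ) + (u / U) • -U = -u := by field_simp; simp [hU0.ne']
  rw [hpt, smul_eq_mul, smul_eq_mul, exp_zero] at hchord
  have hexpU : exp (-U) ≤ 5 / 8 :=
    (exp_le_exp.2 (neg_le_neg hU)).trans exp_neg_one_half_le
  nlinarith [mul_le_mul_of_nonneg_left hexpU hθ0]

end Real

open Finset Real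

section WeightedMean

variable {ι : Type*} (t : Finset ι) (w y : ι → ℝ)

theorem prod_rpow_le_exp_neg_sum_mul_sub_one_sq {M : ℝ} (hM : 1 ≤ M) (hw : ∀ i ∈ t, 0 < w i)
    (hy : ∀ i ∈ t, 0 ≤ y i) (hyM : ∀ i ∈ t, y i ≤ M)
    (hmean : ∑ i ∈ t, w i * y i ≤ ∑ i ∈ t, w i) :
    ∏ i ∈ t, y i ^ w i ≤ exp (-((∑ i ∈ t, w i * (y i - 1) ^ 2) / (2 * M))) := by
  by_cases hzero : ∃ i ∈ t, y i = 0
  · obtain ⟨i, hi, hyi⟩ := hzero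
    rw [prod_eq_zero hi (by rw [hyi, zero_rpow (hw i hi).ne'])]
    positivity
  push Not at hzero
  have hypos : ∀ i ∈ t, 0 < y i := fun i hi ↦ (hy i hi).lt_of_ne (hzero i hi).symm
  have hlog : ∏ i ∈ t, y i ^ w i = exp (∑ i ∈ t, w i * log (y i)) := by
    rw [exp_sum]
    exact prod_congr rfl fun i hi ↦ by rw [rpow_def_of_pos (hypos i hi), mul_comm]
  rw [hlog, exp_le_exp]
  calc ∑ i ∈ t, w i * log (y i)
      ≤ ∑ i ∈ t, w i * (y i - 1 - (y i - 1) ^ 2 / (2 * M)) :=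
        sum_le_sum fun i hi ↦ mul_le_mul_of_nonneg_left
          (log_le_sub_one_sub_sq_div hM (hypos i hi) (hyM i hi)) (hw i hi).le
    _ = (∑ i ∈ t, w i * y i - ∑ i ∈ t, w i) -
          (∑ i ∈ t, w i * (y i - 1) ^ 2) / (2 * M) := by
        simp only [mul_sub, sum_sub_distrib, sum_div, mul_one, mul_div_assoc]
    _ ≤ -((∑ i ∈ t, w i * (y i - 1) ^ 2) / (2 * M)) := by linarith

theorem sum_mul_sub_one_sq_le_of_le {M : ℝ} (hM : 1 ≤ M) (hw : ∀ i ∈ t, 0 < w i)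
    (hy : ∀ i ∈ t, 0 ≤ y i) (hyM : ∀ i ∈ t, y i ≤ M) (hs : 1 ≤ ∑ i ∈ t, w i)
    (hmean : ∑ i ∈ t, w i * y i ≤ ∑ i ∈ t, w i) :
    ∑ i ∈ t, w i * (y i - 1) ^ 2 ≤
      8 / 3 * ((∑ i ∈ t, w i) * M ^ 2) * (1 - ∏ i ∈ t, y i ^ w i) := by
  set Q := ∑ i ∈ t, w i * (y i - 1) ^ 2
  set s := ∑ i ∈ t, w i
  have hQ0 : 0 ≤ Q := sum_nonneg fun i hi ↦ mul_nonneg (hw i hi).le (sq_nonneg _)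
  have hQ : Q ≤ s * M ^ 2 := by
    rw [sum_mul]
    refine sum_le_sum fun i hi ↦ mul_le_mul_of_nonneg_left ?_ (hw i hi).le
    nlinarith [hy i hi, hyM i hi]
  have hchord := exp_neg_le_one_sub_of_le (u := Q / (2 * M)) (U := s * M / 2) (by positivity)
    (by rw [div_le_div_iff₀ (by positivity) two_pos]; nlinarith) (by nlinarith)
  have hprod := prod_rpow_le_exp_neg_sum_mul_sub_one_sq t w y hM hw hy hyM hmean
  have hsM : 0 < s * M ^ 2 := by positivity
  have hratio : Q / (2 * M) / (s * M / 2) = Q / (s * M ^ 2) := by field_simp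
  rw [hratio] at hchord
  calc Q = 8 / 3 * (s * M ^ 2) * (3 / 8 * (Q / (s * M ^ 2))) := by field_simp
    _ ≤ 8 / 3 * (s * M ^ 2) * (1 - ∏ i ∈ t, y i ^ w i) := by gcongr; linarith

theorem sum_mul_sub_one_sq_le [Fintype ι] (hw : ∀ i, 0 < w i) (hy : ∀ i, 0 ≤ y i)
    (hs : 1 ≤ ∑ i, w i) (hmean : ∑ i, w i * y i ≤ ∑ i, w i) :
    ∑ i, w i * (y i - 1) ^ 2 ≤
      8 / 3 * ((∑ i, w i) ^ 3 / (⨅ i, w i) ^ 2) * (1 - ∏ i, y i ^ w i) := by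
  have : Nonempty ι := (nonempty_of_sum_ne_zero (s := univ) (f := w) (by linarith)).to_type
  obtain ⟨j, hj⟩ := exists_eq_ciInf_of_finite (f := w)
  set s := ∑ i, w i
  set l := ⨅ i, w i
  have hl : 0 < l := hj ▸ hw j
  have hwl : ∀ i, l ≤ w i := fun i ↦ ciInf_le (Set.finite_range w).bddBelow i
  have hyM : ∀ i, y i ≤ s / l := fun i ↦ by
    rw [le_div_iff₀ hl]
    calc y i * l ≤ w i * y i := by nlinarith [hwl i, hy i]
      _ ≤ ∑ k, w k * y k :=
        single_le_sum (fun k _ ↦ mul_nonneg (hw k).le (hy k)) (mem_univ i)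
      _ ≤ s := hmean
  have hM : 1 ≤ s / l :=
    (one_le_div hl).2 ((hwl j).trans (single_le_sum (fun k _ ↦ (hw k).le) (mem_univ j)))
  calc ∑ i, w i * (y i - 1) ^ 2
      ≤ 8 / 3 * (s * (s / l) ^ 2) * (1 - ∏ i, y i ^ w i) :=
        sum_mul_sub_one_sq_le_of_le univ w y hM (fun i _ ↦ hw i) (fun i _ ↦ hy i)
          (fun i _ ↦ hyM i) hs hmean
    _ = 8 / 3 * (s ^ 3 / l ^ 2) * (1 - ∏ i, y i ^ w i) := by field_simp

end WeightedMean

theorem stmt_18_general (m : ℕ) (lam x : Fin m → ℝ) (c : ℝ)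
    (hlam : ∀ i, 0 < lam i) (hx : ∀ i, 0 ≤ x i)
    (hs : 1 ≤ ∑ i, lam i) (hc : 0 < c)
    (hsum : ∑ i, lam i * x i ≤ c * ∑ i, lam i) :
    ∑ i, lam i * (x i - c) ^ 2 ≤
      8 / 3 * (c ^ (2 - ∑ i, lam i) * (∑ i, lam i) ^ (3 : ℕ) / (⨅ i, lam i) ^ 2) *
        (c ^ (∑ i, lam i) - ∏ i, x i ^ lam i) := by
  set s := ∑ i, lam i
  have hxc : ∀ i, x i = c * (x i / c) := fun i ↦ by field_simp
  have hmean : ∑ i, lam i * (x i / c) ≤ s := by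
    simp only [mul_div_assoc', ← sum_div]
    rwa [div_le_iff₀ hc, mul_comm]
  have hy : ∀ i, 0 ≤ x i / c := fun i ↦ div_nonneg (hx i) hc.le
  have hlhs : ∑ i, lam i * (x i - c) ^ 2 = c ^ 2 * ∑ i, lam i * (x i / c - 1) ^ 2 := by
    rw [mul_sum]
    exact sum_congr rfl fun i _ ↦ by rw [hxc i]; field_simp
  have hprod : ∏ i, x i ^ lam i = c ^ s * ∏ i, (x i / c) ^ lam i := by
    rw [rpow_sum_of_pos hc, ← prod_mul_distrib]
    exact prod_congr rfl fun i _ ↦ by rw [← mul_rpow hc.le (hy i), ← hxc i]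
  have hc2 : c ^ (2 - s) * c ^ s = c ^ 2 := by
    rw [← rpow_add hc, sub_add_cancel, rpow_two]
  rw [hlhs, hprod]
  calc c ^ 2 * ∑ i, lam i * (x i / c - 1) ^ 2
      ≤ c ^ 2 * (8 / 3 * (s ^ 3 / (⨅ i, lam i) ^ 2) * (1 - ∏ i, (x i / c) ^ lam i)) :=
        mul_le_mul_of_nonneg_left (sum_mul_sub_one_sq_le lam _ hlam hy hs hmean) (by positivity)
    _ = _ := by rw [← hc2]; ring

/-- Quantitative weighted arithmetic–geometric mean inequality. -/
theorem stmt_18 (m : ℕ) (hm : 1 ≤ m) (lam x : Fin m → ℝ) (c : ℝ)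
    (hlam : ∀ i, 0 < lam i) (hx : ∀ i, 0 ≤ x i)
    (hs : 1 ≤ ∑ i, lam i) (hc : 0 < c)
    (hsum : ∑ i, lam i * x i ≤ c * ∑ i, lam i) :
    ∑ i, lam i * (x i - c) ^ 2 ≤
      8 / 3 * (c ^ (2 - ∑ i, lam i) * (∑ i, lam i) ^ (3 : ℕ) / (⨅ i, lam i) ^ 2) *
        (c ^ (∑ i, lam i) - ∏ i, x i ^ lam i) :=
  stmt_18_general m lam x c hlam hx hs hc hsum
end

section
/- Let Σ', Σ ⊆ ℝⁿ be open convex cones with vertex at 0 such that the closure of Σ' ∩ ∂B₁ is a compact subset of Σ ∩ ∂B₁ (where ∂B₁ is the unit sphere). Let v : Σ → [0,∞) be a nonnegative, concave, positively 1-homogeneous function (v(tx) = t v(x) for x ∈ Σ, t > 0). Then there exists a concave, positively 1-homogeneous function ṽ : cl(Σ) → ℝ such that ṽ = 0 on ∂Σ and ṽ = v on Σ'. -/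
open Metric Set

noncomputable section

def IsOpenConvexCone {n : ℕ} (S : Set (Euc n)) : Prop :=
  IsOpen S ∧ Convex ℝ S ∧ ∀ x ∈ S, ∀ t : ℝ, 0 < t → t • x ∈ S

/-!
The extension is the infimum of all continuous linear functionals that are nonnegative on `Σ`
and dominate `v` on `Σ'`; an infimum of linear functionals is concave and `1`-homogeneous.
It agrees with `v` on `Σ'` because a concave `1`-homogeneous function is the infimum of its
supporting linear functionals, each of which is admissible since `v ≥ 0`. It vanishes at a
boundary point `x` of `Σ`: a functional `g` separating `x` from `Σ` is positive on `Σ` and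
vanishes at `x`, and by compactness of the spherical section of `Σ'` inside `Σ` some multiple
`c • g` dominates `v` on `Σ'`.
-/

open Filter Topology

section

variable {E : Type*} [NormedAddCommGroup E] [NormedSpace ℝ E]

def IsCone (S : Set E) : Prop :=
  ∀ x ∈ S, ∀ t : ℝ, 0 < t → t • x ∈ S

def PosHomogeneousOn (f : E → ℝ) (S : Set E) : Prop :=
  ∀ x ∈ S, ∀ t : ℝ, 0 < t → f (t • x) = t * f x

theorem PosHomogeneousOn.map_zero {f : E → ℝ} {S : Set E} (hf : PosHomogeneousOn f S)
    (h0 : (0 : E) ∈ S) : f 0 = 0 := by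
  have h := hf 0 h0 2 two_pos
  rw [smul_zero] at h
  linarith

theorem IsCone.inv_norm_smul_mem {S : Set E} (hS : IsCone S) {y : E} (hy : y ∈ S)
    (hy0 : y ≠ 0) : ‖y‖⁻¹ • y ∈ S ∩ sphere 0 1 :=
  ⟨hS y hy _ (inv_pos.2 (norm_pos_iff.2 hy0)),
    by simp [norm_smul, inv_mul_cancel₀ (norm_ne_zero_iff.2 hy0)]⟩

theorem PosHomogeneousOn.le_of_le_on_sphere {S : Set E} (hS : IsCone S) {φ ψ : E → ℝ}
    (hφ : PosHomogeneousOn φ S) (hψ : PosHomogeneousOn ψ S)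
    (h : ∀ u ∈ S ∩ sphere 0 1, φ u ≤ ψ u) : ∀ y ∈ S, φ y ≤ ψ y := by
  intro y hy
  obtain rfl | hy0 := eq_or_ne y 0
  · rw [hφ.map_zero hy, hψ.map_zero hy]
  have hu := hS.inv_norm_smul_mem hy hy0
  have hny : 0 < ‖y‖ := norm_pos_iff.2 hy0
  rw [← smul_inv_smul₀ hny.ne' y, hφ _ hu.1 _ hny, hψ _ hu.1 _ hny]
  exact mul_le_mul_of_nonneg_left (h _ hu) hny.le

/-- The point `0` is not reached by rescaling the sphere: if `0 ∈ S'`, it is the midpoint of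
some `t • x₀` with `x₀ ∈ S` and `-(t • x₀)`, which lies in `S'` for small `t > 0`. -/
theorem IsCone.subset_of_inter_sphere_subset {S' S : Set E} (hS'o : IsOpen S')
    (hS' : IsCone S') (hSc : Convex ℝ S) (hS : IsCone S) (hSne : S.Nonempty)
    (h : S' ∩ sphere 0 1 ⊆ S) : S' ⊆ S := by
  have hne : ∀ y ∈ S', y ≠ 0 → y ∈ S := fun y hy hy0 => by
    simpa [smul_inv_smul₀ (norm_ne_zero_iff.2 hy0)] using
      hS _ (h (hS'.inv_norm_smul_mem hy hy0)) ‖y‖ (norm_pos_iff.2 hy0)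
  intro y hy
  obtain hy0 | rfl := ne_or_eq y 0
  · exact hne y hy hy0
  obtain ⟨x₀, hx₀⟩ := hSne
  obtain rfl | hx₀0 := eq_or_ne x₀ 0
  · exact hx₀
  have hnear : ∀ᶠ t in 𝓝 (0 : ℝ), -(t • x₀) ∈ S' :=
    ((by fun_prop : Continuous fun t : ℝ => -(t • x₀)).tendsto' 0 0 (by simp)).eventually
      (hS'o.mem_nhds hy)
  obtain ⟨t, hmem, ht⟩ := ((hnear.filter_mono nhdsWithin_le_nhds).and
    (self_mem_nhdsWithin : Ioi (0 : ℝ) ∈ 𝓝[>] 0)).exists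
  have hneg : -(t • x₀) ∈ S := hne _ hmem (by simp [ht.ne', hx₀0])
  simpa using hSc (hS x₀ hx₀ t ht) hneg (by norm_num : (0 : ℝ) ≤ 1 / 2)
    (by norm_num : (0 : ℝ) ≤ 1 / 2) (by norm_num)

theorem exists_le_smul_of_isCompact_closure_inter_sphere {S' S : Set E} (hS' : IsCone S')
    (hK : IsCompact (closure (S' ∩ sphere 0 1))) (hKS : closure (S' ∩ sphere 0 1) ⊆ S)
    {v : E → ℝ} (hvc : ContinuousOn v S) (hvhom : PosHomogeneousOn v S')
    {g : StrongDual ℝ E} (hg : ∀ y ∈ S, 0 < g y) :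
    ∃ c : ℝ, 0 ≤ c ∧ ∀ y ∈ S', v y ≤ (c • g) y := by
  obtain ⟨C, hC⟩ := hK.bddAbove_image
    ((hvc.mono hKS).div g.continuous.continuousOn fun u hu => (hg u (hKS hu)).ne')
  refine ⟨max C 0, le_max_right C 0, hvhom.le_of_le_on_sphere hS' ?_ fun u hu => ?_⟩
  · intro y _ t _
    simp only [map_smul, smul_eq_mul, smul_apply]
  · have hgu := hg u (hKS (subset_closure hu))
    have hratio : v u / g u ≤ max C 0 :=
      (hC (mem_image_of_mem _ (subset_closure hu))).trans (le_max_left C 0)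
    rwa [div_le_iff₀ hgu] at hratio

theorem ConcaveOn.exists_affine_ge_eq {S : Set E} {v : E → ℝ} (hSo : IsOpen S)
    (hv : ConcaveOn ℝ S v) (hvc : ContinuousOn v S) {x : E} (hx : x ∈ S) :
    ∃ (ℓ : StrongDual ℝ E) (c : ℝ), (∀ y ∈ S, v y ≤ ℓ y + c) ∧ v x = ℓ x + c := by
  have hHo : IsOpen {p : E × ℝ | p.1 ∈ S ∧ p.2 < v p.1} := by
    convert ((hvc.comp continuousOn_fst fun _ h => h).sub continuousOn_snd).isOpen_inter_preimage
      (hSo.preimage continuous_fst) (isOpen_Ioi (a := 0)) using 1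
    ext p
    change _ ↔ p.1 ∈ S ∧ 0 < v p.1 - p.2
    rw [sub_pos]
    rfl
  obtain ⟨f, hf⟩ := geometric_hahn_banach_open_point hv.convex_strict_hypograph hHo
    (fun h => lt_irrefl _ h.2 : (x, v x) ∉ {p : E × ℝ | p.1 ∈ S ∧ p.2 < v p.1})
  set g := f.comp (ContinuousLinearMap.inl ℝ E ℝ)
  set a := f (0, 1)
  have hsplit : ∀ y t, f (y, t) = g y + t * a := fun y t => calc
    f (y, t) = f ((y, 0) + t • (0, 1)) := by simp
    _ = g y + t * a := by rw [map_add, map_smul]; rfl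
  have ha : 0 < a := by
    have := hf (x, v x - 1) ⟨hx, by simp⟩
    rw [hsplit, hsplit] at this
    linarith
  refine ⟨-a⁻¹ • g, v x + a⁻¹ * g x, fun y hy => ?_, by simp⟩
  have hbound : v y ≤ (g x + v x * a - g y) / a := le_of_forall_lt fun t ht => by
    have := hf (y, t) ⟨hy, ht⟩
    rw [hsplit, hsplit] at this
    rw [lt_div_iff₀ ha]
    linarith
  convert hbound using 1
  simp only [smul_apply, smul_eq_mul]
  field_simp
  ring

/-- Homogeneity forces the constant term of a supporting affine function to vanish. -/
theorem ConcaveOn.exists_dual_ge_eq_of_posHomogeneousOn {S : Set E} {v : E → ℝ}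
    (hSo : IsOpen S) (hS : IsCone S) (hv : ConcaveOn ℝ S v) (hvc : ContinuousOn v S)
    (hvhom : PosHomogeneousOn v S) {x : E} (hx : x ∈ S) :
    ∃ ℓ : StrongDual ℝ E, (∀ y ∈ S, v y ≤ ℓ y) ∧ ℓ x = v x := by
  obtain ⟨ℓ, c, hle, heq⟩ := hv.exists_affine_ge_eq hSo hvc hx
  have hscale : ∀ t : ℝ, 0 < t → t * c ≤ c := fun t ht => by
    have := hle _ (hS x hx t ht)
    rw [hvhom x hx t ht, map_smul, smul_eq_mul, heq] at this
    linarith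
  have hc : c = 0 := by linarith [hscale 2 two_pos, hscale (1 / 2) (by norm_num)]
  exact ⟨ℓ, fun y hy => by simpa [hc] using hle y hy, by simp [heq, hc]⟩

theorem nonpos_and_nonneg_of_forall_mul_lt {a b : ℝ} (h : ∀ t : ℝ, 0 < t → t * a < b) :
    a ≤ 0 ∧ 0 ≤ b := by
  have ha : a ≤ 0 := by
    by_contra! ha
    have := h ((|b| + 1) / a) (by positivity)
    rw [div_mul_cancel₀ _ ha.ne'] at this
    linarith [le_abs_self b]
  refine ⟨ha, ?_⟩
  by_contra! hb
  have ha' : a < 0 := by linarith [h 1 one_pos]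
  have := h (b / (2 * a)) (div_pos_of_neg_of_neg hb (by linarith))
  rw [div_mul_eq_mul_div, mul_div_mul_right _ _ ha'.ne] at this
  linarith

theorem exists_dual_pos_eq_zero_of_mem_frontier {S : Set E} (hSo : IsOpen S)
    (hSc : Convex ℝ S) (hS : IsCone S) {x : E} (hx : x ∈ frontier S) :
    ∃ g : StrongDual ℝ E, (∀ y ∈ S, 0 < g y) ∧ g x = 0 := by
  rw [hSo.frontier_eq] at hx
  obtain ⟨f, hf⟩ := geometric_hahn_banach_open_point hSc hSo hx.2
  have hscale : ∀ y ∈ S, f y ≤ 0 ∧ 0 ≤ f x := fun y hy =>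
    nonpos_and_nonneg_of_forall_mul_lt fun t ht => by
      simpa using hf _ (hS y hy t ht)
  obtain ⟨y₀, hy₀⟩ := closure_nonempty_iff.1 ⟨x, hx.1⟩
  have hfx : f x = 0 := le_antisymm
    (closure_minimal (fun y hy => (hscale y hy).1) (isClosed_le f.continuous continuous_const)
      hx.1) (hscale y₀ hy₀).2
  exact ⟨-f, fun y hy => by simpa [hfx] using hf y hy, by simp [hfx]⟩

section InfDual

variable (L : Set (StrongDual ℝ E))

def infDual (x : E) : ℝ :=
  ⨅ ℓ : L, (ℓ : StrongDual ℝ E) x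

variable {L}

theorem infDual_le {x : E} (hx : BddBelow (range fun ℓ : L => (ℓ : StrongDual ℝ E) x))
    {ℓ : StrongDual ℝ E} (hℓ : ℓ ∈ L) : infDual L x ≤ ℓ x :=
  ciInf_le hx ⟨ℓ, hℓ⟩

theorem le_infDual (hL : L.Nonempty) {x : E} {a : ℝ} (h : ∀ ℓ ∈ L, a ≤ ℓ x) :
    a ≤ infDual L x :=
  have := hL.to_subtype
  le_ciInf fun ℓ => h ℓ ℓ.2

theorem infDual_smul {t : ℝ} (ht : 0 ≤ t) (x : E) : infDual L (t • x) = t * infDual L x := by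
  simp only [infDual, map_smul, smul_eq_mul, Real.mul_iInf_of_nonneg ht]

theorem concaveOn_infDual {C : Set E} (hC : Convex ℝ C) (hL : L.Nonempty)
    (hbdd : ∀ x ∈ C, BddBelow (range fun ℓ : L => (ℓ : StrongDual ℝ E) x)) :
    ConcaveOn ℝ C (infDual L) := by
  refine ⟨hC, fun x hx y hy a b ha hb _ => le_infDual hL fun ℓ hℓ => ?_⟩
  rw [map_add, map_smul, map_smul]
  exact add_le_add (smul_le_smul_of_nonneg_left (infDual_le (hbdd x hx) hℓ) ha)
    (smul_le_smul_of_nonneg_left (infDual_le (hbdd y hy) hℓ) hb)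

end InfDual

end

/-- Extension of a nonnegative concave `1`-homogeneous function on a cone `Σ` to a
concave `1`-homogeneous function on `cl Σ` vanishing on `∂Σ` and agreeing with the
original function on a subcone `Σ'` whose spherical section is compactly contained
in that of `Σ`. -/
theorem stmt_19 {n : ℕ} (S' S : Set (Euc n))
    (hS' : IsOpenConvexCone S') (hS : IsOpenConvexCone S)
    (hcomp : IsCompact (closure (S' ∩ sphere (0 : Euc n) 1)))
    (hsub : closure (S' ∩ sphere (0 : Euc n) 1) ⊆ S ∩ sphere (0 : Euc n) 1)
    (v : Euc n → ℝ) (hv0 : ∀ x ∈ S, 0 ≤ v x)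
    (hvconc : ConcaveOn ℝ S v)
    (hvhom : ∀ x ∈ S, ∀ t : ℝ, 0 < t → v (t • x) = t * v x) :
    ∃ vt : Euc n → ℝ, ConcaveOn ℝ (closure S) vt ∧
      (∀ x ∈ closure S, ∀ t : ℝ, 0 < t → vt (t • x) = t * vt x) ∧
      (∀ x ∈ frontier S, vt x = 0) ∧
      (∀ x ∈ S', vt x = v x) := by
  obtain ⟨hS'o, -, hS'cone⟩ := hS'
  obtain ⟨hSo, hSc, hScone⟩ := hS
  obtain rfl | hSne := S.eq_empty_or_nonempty
  · exact ⟨v, by simpa using hvconc, by simp, by simp, fun _ _ => rfl⟩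
  have hvc := hvconc.continuousOn hSo
  have hKS : closure (S' ∩ sphere 0 1) ⊆ S := fun u hu => (hsub hu).1
  have hS'S : S' ⊆ S := IsCone.subset_of_inter_sphere_subset hS'o hS'cone hSc hScone hSne
    (subset_closure.trans hKS)
  set L := {ℓ : StrongDual ℝ (Euc n) | (∀ y ∈ S, 0 ≤ ℓ y) ∧ ∀ y ∈ S', v y ≤ ℓ y}
  have hsupport : ∀ x ∈ S, ∃ ℓ ∈ L, ℓ x = v x := fun x hx => by
    obtain ⟨ℓ, hℓ, hℓx⟩ :=
      hvconc.exists_dual_ge_eq_of_posHomogeneousOn hSo hScone hvc hvhom hx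
    exact ⟨ℓ, ⟨fun y hy => (hv0 y hy).trans (hℓ y hy), fun y hy => hℓ y (hS'S hy)⟩, hℓx⟩
  have hLne : L.Nonempty := let ⟨x₀, hx₀⟩ := hSne; let ⟨ℓ, hℓ, _⟩ := hsupport x₀ hx₀; ⟨ℓ, hℓ⟩
  have hLnonneg : ∀ x ∈ closure S, ∀ ℓ ∈ L, 0 ≤ ℓ x := fun x hx ℓ hℓ =>
    closure_minimal hℓ.1 (isClosed_le continuous_const ℓ.continuous) hx
  have hbdd : ∀ x ∈ closure S, BddBelow (range fun ℓ : L => (ℓ : StrongDual ℝ _) x) :=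
    fun x hx => ⟨0, by rintro _ ⟨ℓ, rfl⟩; exact hLnonneg x hx ℓ ℓ.2⟩
  refine ⟨infDual L, concaveOn_infDual hSc.closure hLne hbdd,
    fun x _ t ht => infDual_smul ht.le x, fun x hx => ?_, fun x hx => ?_⟩
  · obtain ⟨g, hg, hgx⟩ := exists_dual_pos_eq_zero_of_mem_frontier hSo hSc hScone hx
    obtain ⟨c, hc, hcg⟩ := exists_le_smul_of_isCompact_closure_inter_sphere hS'cone hcomp hKS
      hvc (fun y hy => hvhom y (hS'S hy)) hg
    have hcgL : c • g ∈ L := ⟨fun y hy => mul_nonneg hc (hg y hy).le, hcg⟩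
    have hxS := frontier_subset_closure hx
    exact le_antisymm (by simpa [hgx] using infDual_le (hbdd x hxS) hcgL)
      (le_infDual hLne (hLnonneg x hxS))
  · obtain ⟨ℓ, hℓ, hℓx⟩ := hsupport x (hS'S hx)
    exact le_antisymm (hℓx ▸ infDual_le (hbdd x (subset_closure (hS'S hx))) hℓ)
      (le_infDual hLne fun ℓ hℓ => hℓ.2 x hx)
end
end
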